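/- arXiv:1506.06081 — 2 statements merged into one kernel-verified Lean document; each statement's English description precedes it below -/
import Mathlib

section
/- Suppose f satisfies the regularity condition RC(ε, α, β), suppose Z^k ∈ R^{n×r} satisfies d(Z^k, Z*) ≤ ε, and let 0 < μ < min(α/2, 2/β). Then the gradient update Z^{k+1} = Z^k − (μ/‖Z*‖_F²) ∇f(Z^k) satisfies d(Z^{k+1}, Z*) ≤ √(1 − 2μ/(α κ r)) · d(Z^k, Z*), where κ = σ_1/σ_r. -/
open Matrix MeasureTheory ProbabilityTheory Real
open scoped BigOperators ENNReal

noncomputable section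

/-- Frobenius norm of a real matrix. -/
def frobNorm {a b : ℕ} (M : Matrix (Fin a) (Fin b) ℝ) : ℝ :=
  Real.sqrt (∑ i, ∑ j, (M i j) ^ 2)

/-- Frobenius (trace) inner product `⟨M, N⟩ = trace (Mᵀ N)`. -/
def frobInner {a b : ℕ} (M N : Matrix (Fin a) (Fin b) ℝ) : ℝ :=
  ∑ i, ∑ j, M i j * N i j

/-- Operator (spectral) norm of a real square matrix. -/
def opNorm {n : ℕ} (M : Matrix (Fin n) (Fin n) ℝ) : ℝ :=
  ‖LinearMap.toContinuousLinearMap (Matrix.toEuclideanLin M)‖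

/-- An `r × r` real matrix is orthonormal if `U Uᵀ = Uᵀ U = I`. -/
def IsOrthoMat {r : ℕ} (U : Matrix (Fin r) (Fin r) ℝ) : Prop :=
  U * Uᵀ = 1 ∧ Uᵀ * U = 1

/-- The solution set `S̃ = {Z* U : U orthonormal}`. -/
def solSet {n r : ℕ} (Zstar : Matrix (Fin n) (Fin r) ℝ) : Set (Matrix (Fin n) (Fin r) ℝ) :=
  {Zt | ∃ U, IsOrthoMat U ∧ Zt = Zstar * U}

/-- The distance `d(Z, Z*) = min_{Z̃ ∈ S̃} ‖Z − Z̃‖_F`. -/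
def dSol {n r : ℕ} (Z Zstar : Matrix (Fin n) (Fin r) ℝ) : ℝ :=
  ⨅ Zt : solSet Zstar, frobNorm (Z - (Zt : Matrix (Fin n) (Fin r) ℝ))

/-- `Zbar` is a matrix in the solution set closest to `Z`. -/
def IsClosest {n r : ℕ} (Zstar Z Zbar : Matrix (Fin n) (Fin r) ℝ) : Prop :=
  Zbar ∈ solSet Zstar ∧ ∀ Zt ∈ solSet Zstar, frobNorm (Z - Zbar) ≤ frobNorm (Z - Zt)

/-- The gradient `∇f(Z) = (1/m) Σ_i (trace(Zᵀ A_i Z) − b_i) A_i Z`. -/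
def gradf {n r m : ℕ} (A : Fin m → Matrix (Fin n) (Fin n) ℝ) (b : Fin m → ℝ)
    (Z : Matrix (Fin n) (Fin r) ℝ) : Matrix (Fin n) (Fin r) ℝ :=
  (1 / (m : ℝ)) • ∑ i, (Matrix.trace (Zᵀ * A i * Z) - b i) • (A i * Z)

/-- Assumption A1 with parameter `δ`. -/
def AssumpA1 {n m : ℕ} (A : Fin m → Matrix (Fin n) (Fin n) ℝ) (σ1 : ℝ) (r : ℕ)
    (δ : ℝ) : Prop :=
  ∀ u : Fin n → ℝ, Real.sqrt (∑ i, u i ^ 2) ≤ Real.sqrt σ1 →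
    opNorm ((1 / (m : ℝ)) • ∑ i, (u ⬝ᵥ (A i).mulVec u) • A i - (2 : ℝ) • vecMulVec u u)
      ≤ δ / r

/-- Assumption A2 with parameter `δ`. -/
def AssumpA2 {n r m : ℕ} (A : Fin m → Matrix (Fin n) (Fin n) ℝ)
    (Zstar : Matrix (Fin n) (Fin r) ℝ) (δ : ℝ) : Prop :=
  ∀ Zt ∈ solSet Zstar, ∀ s k : Fin r,
    opNorm ((1 / (m : ℝ)) •
        ∑ i, (2 : ℝ) • (A i * vecMulVec (fun j => Zt j s) (fun j => Zt j k) * A i)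
      - ((2 * ((fun j => Zt j s) ⬝ᵥ fun j => Zt j k)) • (1 : Matrix (Fin n) (Fin n) ℝ)
          + (2 : ℝ) • vecMulVec (fun j => Zt j k) (fun j => Zt j s)))
      ≤ δ / r

/-- The regularity condition RC(ε, α, β). -/
def RegCond {n r m : ℕ} (A : Fin m → Matrix (Fin n) (Fin n) ℝ) (b : Fin m → ℝ)
    (Zstar : Matrix (Fin n) (Fin r) ℝ) (σr ε α β : ℝ) : Prop :=
  ∀ Z Zbar : Matrix (Fin n) (Fin r) ℝ, dSol Z Zstar ≤ ε → IsClosest Zstar Z Zbar →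
    frobInner (gradf A b Z) (Z - Zbar) ≥
      (1 / α) * σr * frobNorm (Z - Zbar) ^ 2
        + (1 / (β * frobNorm Zstar ^ 2)) * frobNorm (gradf A b Z) ^ 2

/-! A closest point `Zbar` exists because `S̃` is the image of the compact orthogonal group.
With `D = Z - Zbar` and `G = ∇f(Z)`, the new error is `D - η G` for `η = μ/‖Z*‖_F²`, and
`‖D - η G‖² = ‖D‖² - 2η⟨G, D⟩ + η²‖G‖²`. The regularity condition bounds `⟨G, D⟩` from below;
the `‖G‖²` terms cancel as soon as `η ≤ 2/(β‖Z*‖_F²)`, i.e. `μ ≤ 2/β`, leaving the factor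
`1 - 2μσ_r/(α‖Z*‖_F²)`, and `‖Z*‖_F² = σ_1 + … + σ_r ≤ r σ_1` turns it into `1 - 2μ/(ακr)`. -/

theorem norm_sub_smul_le_sqrt_mul_norm {E : Type*} [NormedAddCommGroup E]
    [InnerProductSpace ℝ E] {d g : E} {a c η : ℝ} (h : a * ‖d‖ ^ 2 + c * ‖g‖ ^ 2 ≤ inner ℝ g d)
    (hη : 0 ≤ η) (hηc : η ≤ 2 * c) : ‖d - η • g‖ ≤ √(1 - 2 * η * a) * ‖d‖ := by
  have hsq : ‖d - η • g‖ ^ 2 ≤ (1 - 2 * η * a) * ‖d‖ ^ 2 := by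
    rw [norm_sub_sq_real, inner_smul_right, norm_smul, mul_pow, Real.norm_eq_abs, sq_abs,
      real_inner_comm]
    have hg := mul_le_mul_of_nonneg_right hηc (mul_nonneg hη (sq_nonneg ‖g‖))
    linarith [mul_le_mul_of_nonneg_left h hη]
  calc ‖d - η • g‖ = √(‖d - η • g‖ ^ 2) := (Real.sqrt_sq (norm_nonneg _)).symm
    _ ≤ √((1 - 2 * η * a) * ‖d‖ ^ 2) := Real.sqrt_le_sqrt hsq
    _ = √(1 - 2 * η * a) * ‖d‖ := by
      rw [Real.sqrt_mul' _ (sq_nonneg _), Real.sqrt_sq (norm_nonneg _)]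

section Frobenius

variable {a b : ℕ}

def Matrix.flatten (M : Matrix (Fin a) (Fin b) ℝ) : EuclideanSpace ℝ (Fin a × Fin b) :=
  WithLp.toLp 2 fun p => M p.1 p.2

lemma Matrix.flatten_sub_smul (X G : Matrix (Fin a) (Fin b) ℝ) (c : ℝ) :
    (X - c • G).flatten = X.flatten - c • G.flatten := rfl

lemma frobNorm_eq_norm_flatten (M : Matrix (Fin a) (Fin b) ℝ) : frobNorm M = ‖M.flatten‖ := by
  rw [EuclideanSpace.norm_eq, frobNorm, Fintype.sum_prod_type]
  simp [Matrix.flatten]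

lemma frobInner_eq_inner_flatten (M N : Matrix (Fin a) (Fin b) ℝ) :
    frobInner M N = inner ℝ M.flatten N.flatten := by
  rw [EuclideanSpace.inner_eq_star_dotProduct, frobInner, dotProduct, Fintype.sum_prod_type]
  simp [Matrix.flatten, mul_comm]

lemma frobNorm_sq_eq_trace (M : Matrix (Fin a) (Fin b) ℝ) : frobNorm M ^ 2 = (Mᵀ * M).trace := by
  rw [frobNorm, Real.sq_sqrt (by positivity), Finset.sum_comm]
  simp [Matrix.trace, Matrix.mul_apply, sq]

lemma frobNorm_sub_smul_le {D G : Matrix (Fin a) (Fin b) ℝ} {κ c η : ℝ}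
    (h : κ * frobNorm D ^ 2 + c * frobNorm G ^ 2 ≤ frobInner G D) (hη : 0 ≤ η)
    (hηc : η ≤ 2 * c) : frobNorm (D - η • G) ≤ √(1 - 2 * η * κ) * frobNorm D := by
  simp only [frobNorm_eq_norm_flatten, frobInner_eq_inner_flatten, Matrix.flatten_sub_smul] at *
  exact norm_sub_smul_le_sqrt_mul_norm h hη hηc

lemma frobNorm_sq_eq_sum_of_transpose_mul_self_eq {M : Matrix (Fin a) (Fin b) ℝ}
    {V : Matrix (Fin b) (Fin b) ℝ} {sig : Fin b → ℝ} (hV : IsOrthoMat V)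
    (h : Mᵀ * M = V * Matrix.diagonal sig * Vᵀ) : frobNorm M ^ 2 = ∑ s, sig s := by
  rw [frobNorm_sq_eq_trace, h, Matrix.trace_mul_comm, ← Matrix.mul_assoc, hV.2, Matrix.one_mul,
    Matrix.trace_diagonal]

end Frobenius

section SolutionSet

variable {n r : ℕ}

lemma isOrthoMat_iff_mem_unitaryGroup {U : Matrix (Fin r) (Fin r) ℝ} :
    IsOrthoMat U ↔ U ∈ Matrix.unitaryGroup (Fin r) ℝ := by
  rw [Matrix.mem_unitaryGroup_iff, Matrix.star_eq_conjTranspose,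
    Matrix.conjTranspose_eq_transpose_of_trivial]
  exact ⟨And.left, fun h => ⟨h, mul_eq_one_comm.mp h⟩⟩

lemma isCompact_unitaryGroup_real :
    IsCompact (Matrix.unitaryGroup (Fin r) ℝ : Set (Matrix (Fin r) (Fin r) ℝ)) := by
  have hclosed : IsClosed (Matrix.unitaryGroup (Fin r) ℝ : Set (Matrix (Fin r) (Fin r) ℝ)) :=
    isClosed_unitary
  open scoped Matrix.Norms.Elementwise in
  exact Metric.isCompact_of_isClosed_isBounded hclosed
    (isBounded_iff_forall_norm_le.2 ⟨1, fun _ hU => entrywise_sup_norm_bound_of_unitary hU⟩)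

lemma solSet_eq_image (Zstar : Matrix (Fin n) (Fin r) ℝ) :
    solSet Zstar =
      (fun U : Matrix (Fin r) (Fin r) ℝ => Zstar * U) '' Matrix.unitaryGroup (Fin r) ℝ := by
  ext Zt
  simp only [solSet, Set.mem_ofPred_eq, Set.mem_image, SetLike.mem_coe,
    isOrthoMat_iff_mem_unitaryGroup]
  exact exists_congr fun _ => and_congr_right fun _ => eq_comm

lemma isCompact_solSet (Zstar : Matrix (Fin n) (Fin r) ℝ) : IsCompact (solSet Zstar) := by
  rw [solSet_eq_image]
  exact isCompact_unitaryGroup_real.image (continuous_const.matrix_mul continuous_id)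

lemma self_mem_solSet (Zstar : Matrix (Fin n) (Fin r) ℝ) : Zstar ∈ solSet Zstar :=
  ⟨1, ⟨by simp, by simp⟩, (Matrix.mul_one _).symm⟩

lemma exists_isClosest (Zstar Z : Matrix (Fin n) (Fin r) ℝ) : ∃ Zbar, IsClosest Zstar Z Zbar := by
  have hcont : Continuous fun Zt : Matrix (Fin n) (Fin r) ℝ => frobNorm (Z - Zt) := by
    unfold frobNorm
    fun_prop
  obtain ⟨Zbar, hmem, hmin⟩ :=
    (isCompact_solSet Zstar).exists_isMinOn ⟨Zstar, self_mem_solSet Zstar⟩ hcont.continuousOn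
  exact ⟨Zbar, hmem, fun Zt hZt => hmin hZt⟩

lemma dSol_le_frobNorm {Z Zstar Zt : Matrix (Fin n) (Fin r) ℝ} (h : Zt ∈ solSet Zstar) :
    dSol Z Zstar ≤ frobNorm (Z - Zt) :=
  ciInf_le ⟨0, by rintro _ ⟨_, rfl⟩; exact Real.sqrt_nonneg _⟩ (⟨Zt, h⟩ : solSet Zstar)

lemma IsClosest.dSol_eq {Zstar Z Zbar : Matrix (Fin n) (Fin r) ℝ} (h : IsClosest Zstar Z Zbar) :
    dSol Z Zstar = frobNorm (Z - Zbar) :=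
  haveI : Nonempty (solSet Zstar) := ⟨⟨Zbar, h.1⟩⟩
  le_antisymm (dSol_le_frobNorm h.1) (le_ciInf fun Zt => h.2 Zt Zt.2)

end SolutionSet

theorem gradient_step_contraction_general {n r m : ℕ} (hr : 0 < r)
    (A : Fin m → Matrix (Fin n) (Fin n) ℝ)
(Zstar : Matrix (Fin n) (Fin r) ℝ)
    (sig : Fin r → ℝ) (hpos : ∀ s, 0 < sig s)
    (hmono : ∀ s t : Fin r, s ≤ t → sig t ≤ sig s)
    (hspec : ∃ V, IsOrthoMat V ∧ Zstarᵀ * Zstar = V * Matrix.diagonal sig * Vᵀ)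
    (b : Fin m → ℝ)
    (ε α β μ : ℝ) (hμ0 : 0 < μ) (hμ : μ < min (α / 2) (2 / β))
    (hRC : RegCond A b Zstar (sig ⟨r - 1, Nat.sub_lt hr Nat.one_pos⟩) ε α β)
    (Zk : Matrix (Fin n) (Fin r) ℝ) (hZk : dSol Zk Zstar ≤ ε)
    (Zk1 : Matrix (Fin n) (Fin r) ℝ)
    (hstep : Zk1 = Zk - (μ / frobNorm Zstar ^ 2) • gradf A b Zk) :
    dSol Zk1 Zstar ≤
      Real.sqrt (1 - 2 * μ / (α * ((sig ⟨0, hr⟩) / (sig ⟨r - 1, Nat.sub_lt hr Nat.one_pos⟩)) * r)) * dSol Zk Zstar := by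
  obtain ⟨V, hV, hZstar⟩ := hspec
  set σ1 := sig ⟨0, hr⟩
  set σr := sig ⟨r - 1, Nat.sub_lt hr Nat.one_pos⟩
  set N := frobNorm Zstar ^ 2
  have hα : 0 < α := by linarith [hμ.trans_le (min_le_left _ _)]
  have hN : N = ∑ s, sig s := frobNorm_sq_eq_sum_of_transpose_mul_self_eq hV hZstar
  have hN0 : 0 < N := hN ▸ Finset.sum_pos (fun s _ => hpos s) ⟨⟨0, hr⟩, Finset.mem_univ _⟩
  have hNle : N ≤ r * σ1 := by
    have := Finset.sum_le_card_nsmul Finset.univ sig σ1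
      fun s _ => hmono ⟨0, hr⟩ s (Fin.le_def.2 (Nat.zero_le _))
    simpa [hN] using this
  have hηβ : μ / N ≤ 2 * (1 / (β * N)) :=
    calc μ / N ≤ (2 / β) / N :=
          div_le_div_of_nonneg_right (hμ.trans_le (min_le_right _ _)).le hN0.le
      _ = 2 * (1 / (β * N)) := by ring
  have hrate : 2 * μ / (α * (σ1 / σr) * r) ≤ 2 * (μ / N) * (1 / α * σr) := by
    have hσr := hpos ⟨r - 1, Nat.sub_lt hr Nat.one_pos⟩
    calc 2 * μ / (α * (σ1 / σr) * r) = 2 * μ * σr / (α * (r * σ1)) := by field_simp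
      _ ≤ 2 * μ * σr / (α * N) := by gcongr
      _ = 2 * (μ / N) * (1 / α * σr) := by field_simp
  obtain ⟨Zbar, hcl⟩ := exists_isClosest Zstar Zk
  calc dSol Zk1 Zstar ≤ frobNorm (Zk1 - Zbar) := dSol_le_frobNorm hcl.1
    _ = frobNorm (Zk - Zbar - (μ / N) • gradf A b Zk) := by rw [hstep, sub_right_comm]
    _ ≤ √(1 - 2 * (μ / N) * (1 / α * σr)) * frobNorm (Zk - Zbar) :=
      frobNorm_sub_smul_le (hRC Zk Zbar hZk hcl) (by positivity) hηβ
    _ ≤ √(1 - 2 * μ / (α * (σ1 / σr) * r)) * frobNorm (Zk - Zbar) := by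
      gcongr
      exact Real.sqrt_nonneg _
    _ = √(1 - 2 * μ / (α * (σ1 / σr) * r)) * dSol Zk Zstar := by rw [hcl.dSol_eq]

theorem gradient_step_contraction {n r m : ℕ} (hr : 0 < r)
    (A : Fin m → Matrix (Fin n) (Fin n) ℝ) (hAsym : ∀ i, (A i).IsSymm)
(Zstar : Matrix (Fin n) (Fin r) ℝ)
    (sig : Fin r → ℝ) (hpos : ∀ s, 0 < sig s)
    (hmono : ∀ s t : Fin r, s ≤ t → sig t ≤ sig s)
    (hspec : ∃ V, IsOrthoMat V ∧ Zstarᵀ * Zstar = V * Matrix.diagonal sig * Vᵀ)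
    (b : Fin m → ℝ) (hb : ∀ i, b i = Matrix.trace (A i * (Zstar * Zstarᵀ)))
    (ε α β μ : ℝ) (hμ0 : 0 < μ) (hμ : μ < min (α / 2) (2 / β))
    (hRC : RegCond A b Zstar (sig ⟨r - 1, Nat.sub_lt hr Nat.one_pos⟩) ε α β)
    (Zk : Matrix (Fin n) (Fin r) ℝ) (hZk : dSol Zk Zstar ≤ ε)
    (Zk1 : Matrix (Fin n) (Fin r) ℝ)
    (hstep : Zk1 = Zk - (μ / frobNorm Zstar ^ 2) • gradf A b Zk) :
    dSol Zk1 Zstar ≤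
      Real.sqrt (1 - 2 * μ / (α * ((sig ⟨0, hr⟩) / (sig ⟨r - 1, Nat.sub_lt hr Nat.one_pos⟩)) * r)) * dSol Zk Zstar :=
  gradient_step_contraction_general hr A Zstar sig hpos hmono hspec b ε α β μ hμ0 hμ hRC Zk hZk Zk1
    hstep
end
end

section
/- Suppose Assumption A2 holds with parameter δ > 0. Then for any Z ∈ R^{n×r}, setting H = Z − Z̄, we have (σ_r − δ/2) ‖H‖_F² + ‖H^T Z̄‖_F² ≤ (1/m) Σ_{i=1}^m trace(H^T A_i Z̄)² ≤ (σ_1 + δ/2) ‖H‖_F² + ‖H^T Z̄‖_F². -/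
open Matrix MeasureTheory ProbabilityTheory Real
open scoped BigOperators ENNReal

noncomputable section

/-!
Write `H = Z - Z̄` with columns `hₛ`, `z̄ₛ`. Expanding the square, `(1/m) Σᵢ tr(Hᵀ Aᵢ Z̄)²` is a
sum over pairs `(s, k)` of `(1/m) Σᵢ (hₛᵀ Aᵢ z̄ₛ)(hₖᵀ Aᵢ z̄ₖ)`, which Assumption A2 compares with
`hₛᵀ (z̄ₛᵀ z̄ₖ I + z̄ₖ z̄ₛᵀ) hₖ` up to an error `(δ / 2r) ‖hₛ‖ ‖hₖ‖`; by Cauchy–Schwarz the errors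
add up to at most `(δ/2) ‖H‖²`. The main terms sum to `tr(Z̄ᵀZ̄ HᵀH)`, which lies between
`σ_r ‖H‖²` and `σ_1 ‖H‖²` because `Z̄ᵀZ̄` is orthogonally similar to `diag σ`, plus
`Σ (HᵀZ̄)ₛₖ (HᵀZ̄)ₖₛ`, which equals `‖HᵀZ̄‖²` because `HᵀZ̄` is symmetric: `Z̄` maximizes
`tr(ZᵀZ̃)` over the orbit `Z* O(r)`, and optimality against plane rotations forces `ZᵀZ̄` to be
symmetric.
-/

namespace IsOrthoMat

variable {r : ℕ} {U V : Matrix (Fin r) (Fin r) ℝ}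

lemma transpose (hU : IsOrthoMat U) : IsOrthoMat Uᵀ := by
  rw [IsOrthoMat, transpose_transpose]
  exact hU.symm

lemma mul (hU : IsOrthoMat U) (hV : IsOrthoMat V) : IsOrthoMat (U * V) := by
  constructor
  · rw [transpose_mul, show U * V * (Vᵀ * Uᵀ) = U * (V * Vᵀ) * Uᵀ by noncomm_ring, hV.1,
      mul_one, hU.1]
  · rw [transpose_mul, show Vᵀ * Uᵀ * (U * V) = Vᵀ * (Uᵀ * U) * V by noncomm_ring, hU.2,
      mul_one, hV.2]

end IsOrthoMat

/-- `solSet` leaves the type of `U` to unification, which elaborates `Zstar * U` with the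
`CStarMatrix` multiplication instance; this restates membership with the ordinary product. -/
lemma mem_solSet {n r : ℕ} {Zstar Zt : Matrix (Fin n) (Fin r) ℝ} :
    Zt ∈ solSet Zstar ↔ ∃ U : Matrix (Fin r) (Fin r) ℝ, IsOrthoMat U ∧ Zt = Zstar * U :=
  Iff.rfl

lemma frobNorm_sq {a b : ℕ} (M : Matrix (Fin a) (Fin b) ℝ) :
    frobNorm M ^ 2 = (Mᵀ * M).trace := by
  rw [frobNorm, Real.sq_sqrt (by positivity), trace, Finset.sum_comm]
  simp [mul_apply, sq]

lemma trace_transpose_mul_orthoMat {n r : ℕ} (X : Matrix (Fin n) (Fin r) ℝ)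
    {U : Matrix (Fin r) (Fin r) ℝ} (hU : IsOrthoMat U) :
    ((X * U)ᵀ * (X * U)).trace = (Xᵀ * X).trace := by
  rw [transpose_mul, Matrix.mul_assoc, trace_mul_comm, ← Matrix.mul_assoc, Matrix.mul_assoc,
    hU.1, mul_one]

lemma frobNorm_sub_sq {n r : ℕ} (X Y : Matrix (Fin n) (Fin r) ℝ) :
    frobNorm (X - Y) ^ 2 = frobNorm X ^ 2 - 2 * (Xᵀ * Y).trace + frobNorm Y ^ 2 := by
  rw [frobNorm_sq, frobNorm_sq, frobNorm_sq, transpose_sub, Matrix.sub_mul, Matrix.mul_sub,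
    Matrix.mul_sub, trace_sub, trace_sub, trace_sub, ← trace_transpose (Yᵀ * X), transpose_mul,
    transpose_transpose]
  ring

section Householder

variable {r : ℕ}

def householder (v : Fin r → ℝ) : Matrix (Fin r) (Fin r) ℝ :=
  1 - (2 / (v ⬝ᵥ v)) • vecMulVec v v

/-- For `v = 0` the junk value `2 / 0 = 0` makes `householder 0 = 1`, still orthogonal. -/
lemma householder_isOrthoMat (v : Fin r → ℝ) : IsOrthoMat (householder v) := by
  have hsymm : (householder v)ᵀ = householder v := by
    simp [householder, transpose_vecMulVec]
  have hsq : householder v * householder v = 1 := by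
    have hcoef : 2 / (v ⬝ᵥ v) * (2 / (v ⬝ᵥ v) * (v ⬝ᵥ v)) = 2 / (v ⬝ᵥ v) + 2 / (v ⬝ᵥ v) := by
      rcases eq_or_ne (v ⬝ᵥ v) 0 with h | h
      · simp [h]
      · field_simp; ring
    simp only [householder, Matrix.sub_mul, Matrix.mul_sub, Matrix.one_mul, Matrix.mul_one,
      Matrix.smul_mul, Matrix.mul_smul, vecMulVec_mul_vecMulVec, vecMulVec_smul, smul_sub,
      smul_smul, hcoef, add_smul]
    abel
  exact ⟨by rw [hsymm, hsq], by rw [hsymm, hsq]⟩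

lemma trace_mul_householder_mul_householder (W : Matrix (Fin r) (Fin r) ℝ) (u v : Fin r → ℝ) :
    (W * (householder u * householder v)).trace = W.trace - 2 / (u ⬝ᵥ u) * (W *ᵥ u ⬝ᵥ u)
      - 2 / (v ⬝ᵥ v) * (W *ᵥ v ⬝ᵥ v)
      + 2 / (u ⬝ᵥ u) * (2 / (v ⬝ᵥ v)) * (u ⬝ᵥ v) * (W *ᵥ u ⬝ᵥ v) := by
  have hprod : householder u * householder v = 1 - (2 / (u ⬝ᵥ u)) • vecMulVec u u
      - (2 / (v ⬝ᵥ v)) • vecMulVec v v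
      + (2 / (u ⬝ᵥ u) * (2 / (v ⬝ᵥ v)) * (u ⬝ᵥ v)) • vecMulVec u v := by
    simp only [householder, Matrix.sub_mul, Matrix.mul_sub, Matrix.one_mul, Matrix.mul_one,
      Matrix.smul_mul, Matrix.mul_smul, vecMulVec_mul_vecMulVec, vecMulVec_smul, smul_smul]
    module
  simp only [hprod, Matrix.mul_add, Matrix.mul_sub, Matrix.mul_one, Matrix.mul_smul,
    mul_vecMulVec, trace_add, trace_sub, trace_smul, trace_vecMulVec, smul_eq_mul]

end Householder

/-- The rotation `householder eₐ * householder (eₐ + t e_b)` changes `trace W` by a positive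
multiple of `t (W b a - W a b) - t² (W a a + W b b)`; optimality at `U = 1` for all `t` forces the
linear coefficient to vanish. -/
lemma transpose_eq_of_trace_mul_orthoMat_le {r : ℕ} (W : Matrix (Fin r) (Fin r) ℝ)
    (h : ∀ U, IsOrthoMat U → (W * U).trace ≤ W.trace) : Wᵀ = W := by
  ext a b
  rcases eq_or_ne a b with rfl | hab
  · rfl
  have hquad : ∀ t : ℝ, 0 ≤ (W a a + W b b) * (t * t) + (W a b - W b a) * t + 0 := by
    intro t
    have ht := h _ ((householder_isOrthoMat (Pi.single a 1)).mul
      (householder_isOrthoMat (Pi.single a 1 + t • Pi.single b 1)))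
    rw [trace_mul_householder_mul_householder] at ht
    simp only [dotProduct_single, Pi.single_eq_same, mul_one, div_one, mulVec_single,
      MulOpposite.op_one, one_smul, col_apply, dotProduct_add, Pi.add_apply, Pi.smul_apply, ne_eq,
      hab, not_false_eq_true, Pi.single_eq_of_ne, smul_eq_mul, mul_zero, add_zero, dotProduct_smul,
      hab.symm, zero_add, mulVec_add, mulVec_smul] at ht
    have hpos : 0 < 1 + t * t := add_pos_of_pos_of_nonneg one_pos (mul_self_nonneg t)
    have hchange : -2 * W a a - 2 / (1 + t * t) * (W a a + t * W a b + t * (W b a + t * W b b))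
        + 2 * (2 / (1 + t * t)) * (W a a + t * W b a)
        = -(2 * ((W a a + W b b) * (t * t) + (W a b - W b a) * t)) / (1 + t * t) := by
      field_simp
      ring
    have hle : -(2 * ((W a a + W b b) * (t * t) + (W a b - W b a) * t)) / (1 + t * t) ≤ 0 := by
      linarith
    rw [div_le_iff₀ hpos] at hle
    linarith
  have hdisc := discrim_le_zero hquad
  rw [discrim] at hdisc
  rw [transpose_apply]
  nlinarith [sq_nonneg (W a b - W b a)]

namespace IsClosest

variable {n r : ℕ} {Zstar Z Zbar : Matrix (Fin n) (Fin r) ℝ}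

/-- Every point of `solSet Zstar` has the same Frobenius norm, so being closest to `Z`
means maximizing the correlation `trace (Zᵀ Zt)`. -/
lemma trace_le (h : IsClosest Zstar Z Zbar) {Zt : Matrix (Fin n) (Fin r) ℝ}
    (hZt : Zt ∈ solSet Zstar) : (Zᵀ * Zt).trace ≤ (Zᵀ * Zbar).trace := by
  have hsq : frobNorm (Z - Zbar) ^ 2 ≤ frobNorm (Z - Zt) ^ 2 :=
    pow_le_pow_left₀ (Real.sqrt_nonneg _) (h.2 Zt hZt) 2
  obtain ⟨U₀, hU₀, rfl⟩ := mem_solSet.mp h.1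
  obtain ⟨U₁, hU₁, rfl⟩ := mem_solSet.mp hZt
  rw [frobNorm_sub_sq, frobNorm_sub_sq, frobNorm_sq (Zstar * U₀), frobNorm_sq (Zstar * U₁),
    trace_transpose_mul_orthoMat _ hU₀, trace_transpose_mul_orthoMat _ hU₁] at hsq
  linarith

lemma trace_mul_orthoMat_le (h : IsClosest Zstar Z Zbar) {U : Matrix (Fin r) (Fin r) ℝ}
    (hU : IsOrthoMat U) : (Zᵀ * Zbar * U).trace ≤ (Zᵀ * Zbar).trace := by
  obtain ⟨U₀, hU₀, rfl⟩ := mem_solSet.mp h.1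
  rw [Matrix.mul_assoc, Matrix.mul_assoc]
  exact h.trace_le (mem_solSet.mpr ⟨U₀ * U, hU₀.mul hU, rfl⟩)

lemma transpose_mul_symm (h : IsClosest Zstar Z Zbar) : (Zᵀ * Zbar)ᵀ = Zᵀ * Zbar :=
  transpose_eq_of_trace_mul_orthoMat_le _ fun _ hU => h.trace_mul_orthoMat_le hU

lemma sub_transpose_mul_symm (h : IsClosest Zstar Z Zbar) :
    ((Z - Zbar)ᵀ * Zbar)ᵀ = (Z - Zbar)ᵀ * Zbar := by
  rw [transpose_sub, Matrix.sub_mul, transpose_sub, h.transpose_mul_symm, transpose_mul,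
    transpose_transpose]

end IsClosest

lemma transpose_mul_apply_eq_dotProduct {n r : ℕ} (X Y : Matrix (Fin n) (Fin r) ℝ) (s k : Fin r) :
    (Xᵀ * Y) s k = Xᵀ s ⬝ᵥ Yᵀ k :=
  rfl

lemma frobNorm_sq_eq_sum_norm_col_sq {n r : ℕ} (H : Matrix (Fin n) (Fin r) ℝ) :
    frobNorm H ^ 2 = ∑ s, ‖WithLp.toLp 2 (Hᵀ s)‖ ^ 2 := by
  rw [frobNorm, Real.sq_sqrt (by positivity), Finset.sum_comm]
  simp [EuclideanSpace.real_norm_sq_eq]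

lemma frobNorm_sq_eq_sum_mul_of_transpose_eq {r : ℕ} {M : Matrix (Fin r) (Fin r) ℝ}
    (hM : Mᵀ = M) : frobNorm M ^ 2 = ∑ s, ∑ k, M s k * M k s := by
  rw [frobNorm, Real.sq_sqrt (by positivity)]
  refine Finset.sum_congr rfl fun s _ => Finset.sum_congr rfl fun k _ => ?_
  rw [sq, ← transpose_apply M k s, hM]

section TraceBounds

variable {n r : ℕ}

lemma trace_diagonal_mul_eq_sum (σ : Fin r → ℝ) (M : Matrix (Fin r) (Fin r) ℝ) :
    (diagonal σ * M).trace = ∑ s, σ s * M s s := by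
  simp [trace, diagonal_mul]

lemma transpose_mul_self_apply_self_nonneg (K : Matrix (Fin n) (Fin r) ℝ) (s : Fin r) :
    0 ≤ (Kᵀ * K) s s := by
  simpa [mul_apply] using Finset.sum_nonneg fun j (_ : j ∈ Finset.univ) => mul_self_nonneg (K j s)

/-- The trace is `Σ σ s * wₛ` with weights `wₛ ≥ 0` the squared column norms of `H * Gᵀ`,
which sum to `‖H‖_F²`. -/
lemma trace_conj_diagonal_mul_gram_bounds {G : Matrix (Fin r) (Fin r) ℝ} (hG : IsOrthoMat G)
    (σ : Fin r → ℝ) {lo hi : ℝ} (hlo : ∀ s, lo ≤ σ s) (hhi : ∀ s, σ s ≤ hi)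
    (H : Matrix (Fin n) (Fin r) ℝ) :
    lo * (Hᵀ * H).trace ≤ (Gᵀ * diagonal σ * G * (Hᵀ * H)).trace ∧
      (Gᵀ * diagonal σ * G * (Hᵀ * H)).trace ≤ hi * (Hᵀ * H).trace := by
  set K := H * Gᵀ
  have hweights : (Hᵀ * H).trace = ∑ s, (Kᵀ * K) s s := by
    rw [← trace_transpose_mul_orthoMat H hG.transpose]
    rfl
  have hcomb : (Gᵀ * diagonal σ * G * (Hᵀ * H)).trace = ∑ s, σ s * (Kᵀ * K) s s := by
    have hgram : Kᵀ * K = G * (Hᵀ * H) * Gᵀ := by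
      simp only [K, transpose_mul, transpose_transpose, Matrix.mul_assoc]
    rw [← trace_diagonal_mul_eq_sum, hgram, Matrix.mul_assoc _ G, trace_mul_cycle,
      trace_mul_comm]
  rw [hweights, hcomb, Finset.mul_sum, Finset.mul_sum]
  exact ⟨Finset.sum_le_sum fun s _ =>
      mul_le_mul_of_nonneg_right (hlo s) (transpose_mul_self_apply_self_nonneg K s),
    Finset.sum_le_sum fun s _ =>
      mul_le_mul_of_nonneg_right (hhi s) (transpose_mul_self_apply_self_nonneg K s)⟩

end TraceBounds

lemma abs_dotProduct_mulVec_le_opNorm {n : ℕ} (M : Matrix (Fin n) (Fin n) ℝ)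
    (u v : Fin n → ℝ) :
    |u ⬝ᵥ M *ᵥ v| ≤ opNorm M * ‖WithLp.toLp 2 u‖ * ‖WithLp.toLp 2 v‖ := by
  set T := LinearMap.toContinuousLinearMap (toEuclideanLin M)
  have hinner : u ⬝ᵥ M *ᵥ v = inner ℝ (WithLp.toLp 2 u) (T (WithLp.toLp 2 v)) := by
    rw [dotProduct_comm]
    rfl
  rw [hinner]
  calc |inner ℝ (WithLp.toLp 2 u) (T (WithLp.toLp 2 v))|
      ≤ ‖WithLp.toLp 2 u‖ * ‖T (WithLp.toLp 2 v)‖ := abs_real_inner_le_norm _ _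
    _ ≤ ‖WithLp.toLp 2 u‖ * (opNorm M * ‖WithLp.toLp 2 v‖) := by
      gcongr
      exact T.le_opNorm _
    _ = opNorm M * ‖WithLp.toLp 2 u‖ * ‖WithLp.toLp 2 v‖ := by ring

lemma abs_sum_dotProduct_mulVec_le {n r : ℕ} (N : Fin r → Fin r → Matrix (Fin n) (Fin n) ℝ)
    {c : ℝ} (hc : 0 ≤ c) (hN : ∀ s k, opNorm (N s k) ≤ c) (H : Matrix (Fin n) (Fin r) ℝ) :
    |∑ s, ∑ k, Hᵀ s ⬝ᵥ N s k *ᵥ Hᵀ k| ≤ c * r * frobNorm H ^ 2 := by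
  set a : Fin r → ℝ := fun s => ‖WithLp.toLp 2 (Hᵀ s)‖
  calc |∑ s, ∑ k, Hᵀ s ⬝ᵥ N s k *ᵥ Hᵀ k|
      ≤ ∑ s, ∑ k, |Hᵀ s ⬝ᵥ N s k *ᵥ Hᵀ k| :=
        (Finset.abs_sum_le_sum_abs _ _).trans (Finset.sum_le_sum fun s _ =>
          Finset.abs_sum_le_sum_abs _ _)
    _ ≤ ∑ s, ∑ k, c * a s * a k := by
        gcongr with s _ k _
        exact (abs_dotProduct_mulVec_le_opNorm _ _ _).trans (by gcongr; exact hN s k)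
    _ = c * (∑ s, a s) ^ 2 := by
        rw [sq, Finset.sum_mul_sum, Finset.mul_sum]
        simp only [Finset.mul_sum, mul_assoc]
    _ ≤ c * (r * ∑ s, a s ^ 2) := by
        gcongr
        simpa using sq_sum_le_card_mul_sum_sq (s := Finset.univ) (f := a)
    _ = c * r * frobNorm H ^ 2 := by
        rw [frobNorm_sq_eq_sum_norm_col_sq, mul_assoc]

section Expansion

variable {n m : ℕ} (A : Fin m → Matrix (Fin n) (Fin n) ℝ)

/-- The matrix whose operator norm Assumption A2 bounds, for the columns `x = z̃ₛ`, `y = z̃ₖ`. -/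
def a2Deviation (x y : Fin n → ℝ) : Matrix (Fin n) (Fin n) ℝ :=
  (1 / (m : ℝ)) • ∑ i, (2 : ℝ) • (A i * vecMulVec x y * A i)
    - ((2 * (x ⬝ᵥ y)) • (1 : Matrix (Fin n) (Fin n) ℝ) + (2 : ℝ) • vecMulVec y x)

variable {A}

lemma dotProduct_a2Deviation_mulVec (hA : ∀ i, (A i).IsSymm) (x y u v : Fin n → ℝ) :
    u ⬝ᵥ a2Deviation A x y *ᵥ v
      = 2 * ((1 / (m : ℝ)) * ∑ i, (u ⬝ᵥ A i *ᵥ x) * (v ⬝ᵥ A i *ᵥ y))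
        - 2 * ((x ⬝ᵥ y) * (u ⬝ᵥ v)) - 2 * ((u ⬝ᵥ y) * (x ⬝ᵥ v)) := by
  have hsandwich : ∀ i, u ⬝ᵥ (A i * vecMulVec x y * A i) *ᵥ v
      = (u ⬝ᵥ A i *ᵥ x) * (v ⬝ᵥ A i *ᵥ y) := by
    intro i
    rw [mul_vecMulVec, vecMulVec_mul, vecMulVec_mulVec, ← mulVec_transpose, (hA i).eq,
      op_smul_eq_smul, dotProduct_smul, smul_eq_mul, dotProduct_comm (A i *ᵥ y), mul_comm]
  simp only [a2Deviation, sub_mulVec, smul_mulVec, sum_mulVec, add_mulVec, one_mulVec,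
    vecMulVec_mulVec, op_smul_eq_smul, dotProduct_sub, dotProduct_smul, dotProduct_sum,
    hsandwich, smul_eq_mul, dotProduct_add]
  rw [← Finset.mul_sum]
  ring

lemma trace_transpose_mul_mul_eq_sum {r : ℕ} (H Y : Matrix (Fin n) (Fin r) ℝ)
    (B : Matrix (Fin n) (Fin n) ℝ) : (Hᵀ * B * Y).trace = ∑ s, Hᵀ s ⬝ᵥ B *ᵥ Yᵀ s := by
  simp only [trace, diag, dotProduct_mulVec]
  rfl

lemma mean_sq_trace_eq {r : ℕ} (hA : ∀ i, (A i).IsSymm) (H Y : Matrix (Fin n) (Fin r) ℝ) :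
    (1 / (m : ℝ)) * ∑ i, (Hᵀ * A i * Y).trace ^ 2
      = (1 / 2) * ∑ s, ∑ k, Hᵀ s ⬝ᵥ a2Deviation A (Yᵀ s) (Yᵀ k) *ᵥ Hᵀ k
        + (Yᵀ * Y * (Hᵀ * H)).trace + ∑ s, ∑ k, (Hᵀ * Y) s k * (Hᵀ * Y) k s := by
  have hentry : ∀ s k, (1 / (m : ℝ)) * ∑ i, (Hᵀ s ⬝ᵥ A i *ᵥ Yᵀ s) * (Hᵀ k ⬝ᵥ A i *ᵥ Yᵀ k)
      = (1 / 2) * (Hᵀ s ⬝ᵥ a2Deviation A (Yᵀ s) (Yᵀ k) *ᵥ Hᵀ k)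
        + (Yᵀ * Y) s k * (Hᵀ * H) k s + (Hᵀ * Y) s k * (Hᵀ * Y) k s := by
    intro s k
    rw [dotProduct_a2Deviation_mulVec hA, transpose_mul_apply_eq_dotProduct,
      transpose_mul_apply_eq_dotProduct, transpose_mul_apply_eq_dotProduct,
      transpose_mul_apply_eq_dotProduct, dotProduct_comm (Hᵀ k) (Yᵀ s),
      dotProduct_comm (Hᵀ k) (Hᵀ s)]
    ring
  calc (1 / (m : ℝ)) * ∑ i, (Hᵀ * A i * Y).trace ^ 2
      = ∑ s, ∑ k, (1 / (m : ℝ)) * ∑ i, (Hᵀ s ⬝ᵥ A i *ᵥ Yᵀ s) * (Hᵀ k ⬝ᵥ A i *ᵥ Yᵀ k) := by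
        simp only [trace_transpose_mul_mul_eq_sum, sq, Finset.sum_mul_sum]
        simp only [Finset.mul_sum]
        rw [Finset.sum_comm]
        exact Finset.sum_congr rfl fun s _ => Finset.sum_comm
    _ = _ := by
        simp only [hentry, Finset.sum_add_distrib, trace, diag, mul_apply, Finset.mul_sum]

end Expansion

theorem lemma_A2_cross_bounds_general {n r m : ℕ} (hr : 0 < r)
    (A : Fin m → Matrix (Fin n) (Fin n) ℝ) (hAsym : ∀ i, (A i).IsSymm)
(Zstar : Matrix (Fin n) (Fin r) ℝ)
    (sig : Fin r → ℝ)
    (hmono : ∀ s t : Fin r, s ≤ t → sig t ≤ sig s)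
    (hspec : ∃ V, IsOrthoMat V ∧ Zstarᵀ * Zstar = V * Matrix.diagonal sig * Vᵀ)
    (δ : ℝ) (hδ0 : 0 < δ)
    (hA2 : AssumpA2 A Zstar δ)
    (Z Zbar : Matrix (Fin n) (Fin r) ℝ)
    (hZbar : IsClosest Zstar Z Zbar) :
    ((sig ⟨r - 1, Nat.sub_lt hr Nat.one_pos⟩) - δ / 2) * frobNorm (Z - Zbar) ^ 2 + frobNorm ((Z - Zbar)ᵀ * Zbar) ^ 2 ≤
      (1 / (m : ℝ)) * ∑ i, (Matrix.trace ((Z - Zbar)ᵀ * A i * Zbar)) ^ 2 ∧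
    (1 / (m : ℝ)) * ∑ i, (Matrix.trace ((Z - Zbar)ᵀ * A i * Zbar)) ^ 2 ≤
      ((sig ⟨0, hr⟩) + δ / 2) * frobNorm (Z - Zbar) ^ 2 + frobNorm ((Z - Zbar)ᵀ * Zbar) ^ 2 := by
  obtain ⟨V, hV, hZZ⟩ := hspec
  obtain ⟨U, hU, hZbarU⟩ := mem_solSet.mp hZbar.1
  set H := Z - Zbar
  have hgram : Zbarᵀ * Zbar = (Vᵀ * U)ᵀ * diagonal sig * (Vᵀ * U) := by
    rw [hZbarU, transpose_mul, transpose_mul, transpose_transpose, Matrix.mul_assoc,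
      ← Matrix.mul_assoc Zstarᵀ, hZZ]
    simp only [Matrix.mul_assoc]
  have hdev := abs_sum_dotProduct_mulVec_le (fun s k => a2Deviation A (Zbarᵀ s) (Zbarᵀ k))
    (by positivity) (hA2 Zbar hZbar.1) H
  have htr := trace_conj_diagonal_mul_gram_bounds (hV.transpose.mul hU) sig
    (fun s => hmono s ⟨r - 1, Nat.sub_lt hr Nat.one_pos⟩ (Nat.le_sub_one_of_lt s.isLt))
    (fun s => hmono ⟨0, hr⟩ s (Nat.zero_le _)) H
  rw [← hgram, ← frobNorm_sq] at htr
  have hδ : δ / r * r = δ := div_mul_cancel₀ δ (Nat.cast_ne_zero.mpr hr.ne')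
  rw [hδ] at hdev
  rw [mean_sq_trace_eq hAsym H Zbar,
    frobNorm_sq_eq_sum_mul_of_transpose_eq hZbar.sub_transpose_mul_symm]
  constructor <;> linarith [abs_le.mp hdev]

theorem lemma_A2_cross_bounds {n r m : ℕ} (hr : 0 < r)
    (A : Fin m → Matrix (Fin n) (Fin n) ℝ) (hAsym : ∀ i, (A i).IsSymm)
(Zstar : Matrix (Fin n) (Fin r) ℝ)
    (sig : Fin r → ℝ) (hpos : ∀ s, 0 < sig s)
    (hmono : ∀ s t : Fin r, s ≤ t → sig t ≤ sig s)
    (hspec : ∃ V, IsOrthoMat V ∧ Zstarᵀ * Zstar = V * Matrix.diagonal sig * Vᵀ)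
    (δ : ℝ) (hδ0 : 0 < δ)
    (hA2 : AssumpA2 A Zstar δ)
    (Z Zbar : Matrix (Fin n) (Fin r) ℝ)
    (hZbar : IsClosest Zstar Z Zbar) :
    ((sig ⟨r - 1, Nat.sub_lt hr Nat.one_pos⟩) - δ / 2) * frobNorm (Z - Zbar) ^ 2 + frobNorm ((Z - Zbar)ᵀ * Zbar) ^ 2 ≤
      (1 / (m : ℝ)) * ∑ i, (Matrix.trace ((Z - Zbar)ᵀ * A i * Zbar)) ^ 2 ∧
    (1 / (m : ℝ)) * ∑ i, (Matrix.trace ((Z - Zbar)ᵀ * A i * Zbar)) ^ 2 ≤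
      ((sig ⟨0, hr⟩) + δ / 2) * frobNorm (Z - Zbar) ^ 2 + frobNorm ((Z - Zbar)ᵀ * Zbar) ^ 2 :=
  lemma_A2_cross_bounds_general hr A hAsym Zstar sig hmono hspec δ hδ0 hA2 Z Zbar hZbar
end
end
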